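/- arXiv:0807.0540 — 2 statements merged into one kernel-verified Lean document; each statement's English description precedes it below -/
import Mathlib

section
/- Over any field K, for A ∈ X·K[[X]] the shuffle exponential E = exp⧢(A) satisfies the differential equation τ(E) = E ⧢ τ(A), where τ is the coefficient shift operator. -/
open PowerSeries

/-- The shuffle product of formal power series. -/
noncomputable def shuffle {K : Type*} [Field K] (A B : PowerSeries K) : PowerSeries K :=
  PowerSeries.mk fun n => ∑ k ∈ Finset.range (n + 1),
    (n.choose k : K) * (coeff k A) * (coeff (n - k) B)

/-- The shift operator `τ(Σ αₙXⁿ) = Σ α_{n+1}Xⁿ`. -/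
noncomputable def shift {K : Type*} [Field K] (A : PowerSeries K) : PowerSeries K :=
  PowerSeries.mk fun n => coeff (n + 1) A

/-- The shuffle exponential `exp⧢(A) = Σ_{k≥0} A^{⧢k}/k!` of a series without constant
term, well-defined over any field: by the exponential formula its `n`-th coefficient is
the integer polynomial `Σ_π ∏_{b ∈ π} α_{|b|}` in the coefficients of `A`, where `π`
runs over the set partitions of an `n`-element set. -/
noncomputable def expSh {K : Type*} [Field K] (A : PowerSeries K) : PowerSeries K :=
  PowerSeries.mk fun n =>
    ∑ π : Finpartition (Finset.univ : Finset (Fin n)), ∏ b ∈ π.parts, coeff b.card A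

/-! The `n`-th coefficient of `exp⧢(A)` is the complete Bell polynomial `Bₙ(α₁, …, αₙ)`, the
weighted count of the set partitions of an `n`-element set. Classifying the partitions of an
`(n+1)`-element set by the part containing a fixed element gives the recursion
`Bₙ₊₁ = Σₖ C(n,k) Bₖ αₙ₋ₖ₊₁`, which is exactly the `n`-th coefficient of `E ⧢ τ(A)`. -/

open Finset

namespace Finpartition

variable {α : Type*} [DecidableEq α] {s T : Finset α} {a : α}

lemma parts_avoid_of_mem (P : Finpartition s) {b : Finset α} (hb : b ∈ P.parts) :
    (P.avoid b).parts = P.parts.erase b := by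
  ext c
  rw [mem_avoid, mem_erase]
  constructor
  · rintro ⟨d, hd, hdb, rfl⟩
    have hne : d ≠ b := fun h => hdb h.le
    have hdisj : Disjoint d b := P.disjoint hd hb hne
    rw [sdiff_eq_left.mpr hdisj]
    exact ⟨hne, hd⟩
  · rintro ⟨hne, hc⟩
    have hdisj : Disjoint c b := P.disjoint hc hb hne
    exact ⟨c, hc, fun hle => P.ne_bot hc (hdisj.eq_bot_of_le hle), sdiff_eq_left.mpr hdisj⟩

lemma sdiff_part_eq (P : Finpartition s) (a : α) :
    s \ P.part a = s.erase a \ (P.part a).erase a := by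
  ext x
  by_cases hx : x = a
  · subst hx
    simp [mem_part_self]
  · simp [hx]

lemma heq_of_parts_eq {t : Finset α} (h : s = t) {P : Finpartition s} {Q : Finpartition t}
    (hPQ : P.parts = Q.parts) : HEq P Q := by
  subst h
  exact heq_of_eq (Finpartition.ext hPQ)

def removePart (P : Finpartition s) (a : α) : Finpartition (s.erase a \ (P.part a).erase a) :=
  (P.avoid (P.part a)).copy (P.sdiff_part_eq a)

lemma parts_removePart (P : Finpartition s) (ha : a ∈ s) :
    (P.removePart a).parts = P.parts.erase (P.part a) :=
  P.parts_avoid_of_mem (P.part_mem.2 ha)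

def insertPart (P : Finpartition (s.erase a \ T)) (ha : a ∈ s) (hT : T ⊆ s.erase a) :
    Finpartition s :=
  P.extend (b := insert a T) (insert_ne_empty a T)
    (disjoint_left.2 fun x hx hxT => by
      rcases mem_insert.1 hxT with rfl | h
      · simp at hx
      · exact (mem_sdiff.1 hx).2 h)
    (by rw [sup_eq_union, union_insert, sdiff_union_of_subset hT, insert_erase ha])

lemma parts_insertPart (P : Finpartition (s.erase a \ T)) (ha : a ∈ s) (hT : T ⊆ s.erase a) :
    (P.insertPart ha hT).parts = insert (insert a T) P.parts :=
  extend_parts _ _ _ _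

lemma part_insertPart (P : Finpartition (s.erase a \ T)) (ha : a ∈ s) (hT : T ⊆ s.erase a) :
    (P.insertPart ha hT).part a = insert a T :=
  part_eq_of_mem _ (by simp [parts_insertPart]) (mem_insert_self a T)

end Finpartition

section PartitionSum

variable {R : Type*} [CommSemiring R] {α : Type*} [DecidableEq α]

def partitionSum (f : ℕ → R) (s : Finset α) : R :=
  ∑ P : Finpartition s, ∏ b ∈ P.parts, f #b

lemma partitionSum_empty (f : ℕ → R) : partitionSum f (∅ : Finset α) = 1 := by
  rw [partitionSum, ← bot_eq_empty, Fintype.sum_unique, Finpartition.default_eq_empty,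
    Finpartition.empty_parts, prod_empty]

-- `T` is the part of the partition containing `a`, with `a` removed.
lemma partitionSum_eq_sum_powerset (f : ℕ → R) {s : Finset α} {a : α} (ha : a ∈ s) :
    partitionSum f s =
      ∑ T ∈ (s.erase a).powerset, f (#T + 1) * partitionSum f (s.erase a \ T) := by
  simp only [partitionSum, mul_sum]
  rw [sum_sigma']
  refine sum_bij' (fun P _ => ⟨(P.part a).erase a, P.removePart a⟩)
    (fun p hp => p.2.insertPart ha (mem_powerset.1 (mem_sigma.1 hp).1)) ?_ ?_ ?_ ?_ ?_
  · intro P _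
    exact mem_sigma.2 ⟨mem_powerset.2 (erase_subset_erase a (P.part_subset a)), mem_univ _⟩
  · intro _ _
    exact mem_univ _
  · intro P _
    ext1
    rw [Finpartition.parts_insertPart, Finpartition.parts_removePart P ha,
      insert_erase (P.mem_part_self.2 ha), insert_erase (P.part_mem.2 ha)]
  · rintro ⟨T, Q⟩ hp
    have hT := mem_powerset.1 (mem_sigma.1 hp).1
    have haT : a ∉ T := fun h => by simpa using hT h
    have hpart := Q.part_insertPart ha hT
    have hfst : ((Q.insertPart ha hT).part a).erase a = T := by rw [hpart, erase_insert haT]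
    refine Sigma.ext hfst (Finpartition.heq_of_parts_eq (congrArg _ hfst) ?_)
    have hnotin : insert a T ∉ Q.parts := fun h => by simpa using Q.le h (mem_insert_self a T)
    rw [Finpartition.parts_removePart _ ha, hpart, Finpartition.parts_insertPart,
      erase_insert hnotin]
  · intro P _
    have hpa := P.part_mem.2 ha
    rw [← mul_prod_erase _ _ hpa, Finpartition.parts_removePart P ha,
      card_erase_add_one (P.mem_part_self.2 ha)]

def completeBell (f : ℕ → R) : ℕ → R
  | 0 => 1
  | n + 1 => ∑ k ∈ range (n + 1), n.choose k * f (k + 1) * completeBell f (n - k)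

lemma completeBell_succ' (f : ℕ → R) (n : ℕ) :
    completeBell f (n + 1) =
      ∑ k ∈ range (n + 1), n.choose k * completeBell f k * f (n - k + 1) := by
  rw [completeBell, ← sum_range_reflect]
  refine sum_congr rfl fun k hk => ?_
  have hkn : k ≤ n := Nat.lt_succ_iff.1 (mem_range.1 hk)
  rw [show n + 1 - 1 - k = n - k by omega, Nat.sub_sub_self hkn, Nat.choose_symm hkn]
  ring

lemma partitionSum_eq_completeBell (f : ℕ → R) (s : Finset α) :
    partitionSum f s = completeBell f #s := by
  induction h : #s using Nat.strong_induction_on generalizing s with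
  | _ n ih =>
    rcases n with _ | m
    · rw [card_eq_zero.1 h, partitionSum_empty, completeBell]
    · obtain ⟨a, ha⟩ : s.Nonempty := card_pos.1 (by omega)
      have hcard : #(s.erase a) = m := by rw [card_erase_of_mem ha, h]; rfl
      rw [partitionSum_eq_sum_powerset f ha, sum_powerset, hcard, completeBell]
      refine sum_congr rfl fun j _ => ?_
      rw [sum_congr rfl fun T hT => ?_, sum_const, card_powersetCard, hcard, nsmul_eq_mul,
        mul_assoc]
      obtain ⟨hTs, hTc⟩ := mem_powersetCard.1 hT
      rw [hTc, ih (m - j) (by omega) _ (by rw [card_sdiff_of_subset hTs, hcard, hTc])]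

end PartitionSum

lemma coeff_expSh {K : Type*} [Field K] (A : PowerSeries K) (n : ℕ) :
    coeff n (expSh A) = completeBell (coeff · A) n :=
  calc coeff n (expSh A) = partitionSum (coeff · A) (univ : Finset (Fin n)) := coeff_mk _ _
    _ = completeBell (coeff · A) n := by rw [partitionSum_eq_completeBell, card_fin]

theorem shift_expSh_general {K : Type*} [Field K] (A : PowerSeries K) :
    shift (expSh A) = shuffle (expSh A) (shift A) := by
  ext n
  simp only [shift, shuffle, coeff_mk, coeff_expSh]
  exact completeBell_succ' _ n

/-- Over any field, `E = exp⧢(A)` satisfies `τ(E) = E ⧢ τ(A)` for `A ∈ X·K[[X]]`. -/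
theorem shift_expSh {K : Type*} [Field K] (A : PowerSeries K)
    (hA : constantCoeff A = 0) :
    shift (expSh A) = shuffle (expSh A) (shift A) :=
  shift_expSh_general A
end

section
/- Let A, B be rational formal power series in K[[X]] over a field K. Then their shuffle product A ⧢ B is rational, and moreover ‖A ⧢ B‖ ≤ ‖A‖·‖B‖, where ‖C‖ denotes the dimension of the K-span of {τⁿ(C) : n ≥ 0}. -/
open PowerSeries

/-- `A` is rational: `A = f/g` for polynomials `f, g` with `g(0) ≠ 0`. -/
def IsRationalPS {K : Type*} [Field K] (A : PowerSeries K) : Prop :=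
  ∃ f g : Polynomial K, g.coeff 0 ≠ 0 ∧ A * (g : PowerSeries K) = (f : PowerSeries K)

/-- `‖A‖`: the dimension of the `K`-span of the shifts `τⁿ(A)`, `n ≥ 0`. -/
noncomputable def psNorm {K : Type*} [Field K] (A : PowerSeries K) : ℕ :=
  Module.finrank K ↥(Submodule.span K (Set.range fun n => shift^[n] A))

/-
If `A * g = f`, all shifts of `A` lie in the space of series `P` with `P * g` a polynomial of
degree `< N`; for `N` large this space is `τ`-stable, and it embeds in `Kᴺ`. Conversely, if the
shifts of `A` span a finite-dimensional space, then since `K[X]` is infinite-dimensional some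
`p ≠ 0` has `p(τ) A = 0`, and the reversal of `p` is a denominator of `A`.

The Leibniz rule `τ (A ⧢ B) = τ A ⧢ B + A ⧢ τ B` makes the image of `span (τⁱ A) ⊗ span (τʲ B)`
under `⧢` a `τ`-stable space containing `A ⧢ B`, hence all its shifts; its dimension is at most
`‖A‖ ‖B‖`.
-/

open Polynomial (aeval)

namespace Submodule

section CommSemiring

variable {R M N P : Type*} [CommSemiring R] [AddCommMonoid M] [Module R M] [AddCommMonoid N]
  [Module R N] [AddCommMonoid P] [Module R P]

theorem aeval_apply_mem_span_range_iterate (f : Module.End R M) (p : Polynomial R) (x : M) :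
    aeval f p x ∈ span R (Set.range fun n => f^[n] x) := by
  rw [Polynomial.aeval_eq_sum_range, LinearMap.sum_apply]
  exact sum_mem fun i _ => smul_mem _ _ (subset_span ⟨i, (Module.End.pow_apply f i x).symm⟩)

theorem span_range_iterate_mem_invtSubmodule (f : Module.End R M) (x : M) :
    span R (Set.range fun n => f^[n] x) ∈ f.invtSubmodule := by
  rw [Module.End.mem_invtSubmodule_iff_map_le, map_span, span_le]
  rintro _ ⟨_, ⟨n, rfl⟩, rfl⟩
  exact subset_span ⟨n + 1, Function.iterate_succ_apply' f n x⟩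

theorem span_range_iterate_le {f : Module.End R M} {p : Submodule R M}
    (hp : p ∈ f.invtSubmodule) {x : M} (hx : x ∈ p) :
    span R (Set.range fun n => f^[n] x) ≤ p := by
  rw [span_le]
  rintro _ ⟨n, rfl⟩
  induction n with
  | zero => exact hx
  | succ n ih =>
    simp only [Function.iterate_succ_apply'] at ih ⊢
    exact (Module.End.mem_invtSubmodule_iff_forall_mem_of_mem _).1 hp _ ih

theorem map₂_mem_invtSubmodule {B : M →ₗ[R] N →ₗ[R] P} {φ : Module.End R M}
    {ψ : Module.End R N} {χ : Module.End R P} (hB : ∀ x y, χ (B x y) = B (φ x) y + B x (ψ y))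
    {p : Submodule R M} {q : Submodule R N} (hp : p ∈ φ.invtSubmodule)
    (hq : q ∈ ψ.invtSubmodule) : map₂ B p q ∈ χ.invtSubmodule := by
  rw [Module.End.mem_invtSubmodule_iff_forall_mem_of_mem] at hp hq
  rw [Module.End.mem_invtSubmodule_iff_map_le, map₂_eq_span_image2, map_span, span_le]
  rintro _ ⟨_, ⟨x, hx, y, hy, rfl⟩, rfl⟩
  rw [SetLike.mem_coe, hB]
  exact add_mem (subset_span ⟨_, hp x hx, y, hy, rfl⟩) (subset_span ⟨x, hx, _, hq y hy, rfl⟩)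

end CommSemiring

section Field

variable {K M N P : Type*} [Field K] [AddCommGroup M] [Module K M] [AddCommGroup N] [Module K N]
  [AddCommGroup P] [Module K P]

theorem finiteDimensional_map₂ (B : M →ₗ[K] N →ₗ[K] P) (p : Submodule K M) (q : Submodule K N)
    [FiniteDimensional K p] [FiniteDimensional K q] : FiniteDimensional K (map₂ B p q) := by
  rw [TensorProduct.map₂_eq_range_lift_comp_mapIncl]
  infer_instance

theorem finrank_map₂_le (B : M →ₗ[K] N →ₗ[K] P) (p : Submodule K M) (q : Submodule K N)
    [FiniteDimensional K p] [FiniteDimensional K q] :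
    Module.finrank K (map₂ B p q) ≤ Module.finrank K p * Module.finrank K q := by
  rw [TensorProduct.map₂_eq_range_lift_comp_mapIncl, ← Module.finrank_tensorProduct]
  exact LinearMap.finrank_range_le _

end Field

end Submodule

namespace PowerSeries

theorem coe_trunc_eq_self {R : Type*} [Semiring R] {φ : R⟦X⟧} {N : ℕ}
    (h : ∀ n, N ≤ n → coeff n φ = 0) : (trunc N φ : R⟦X⟧) = φ := by
  ext n
  rw [Polynomial.coeff_coe, coeff_trunc]
  split_ifs with hn
  · rfl
  · exact (h n (not_lt.1 hn)).symm

end PowerSeries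

section Shuffle

variable {K : Type*} [Field K]

@[simp] theorem coeff_shift (A : K⟦X⟧) (n : ℕ) : coeff n (shift A) = coeff (n + 1) A :=
  coeff_mk _ _

theorem coeff_shuffle (A B : K⟦X⟧) (n : ℕ) : coeff n (shuffle A B) =
    ∑ k ∈ Finset.range (n + 1), (n.choose k : K) * coeff k A * coeff (n - k) B :=
  coeff_mk _ _

theorem X_mul_shift (A : K⟦X⟧) : X * shift A = A - C (constantCoeff A) :=
  (sub_const_eq_X_mul_shift A).symm

variable (K) in
noncomputable def shiftₗ : Module.End K K⟦X⟧ where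
  toFun := shift
  map_add' A B := by ext n; simp
  map_smul' a A := by ext n; simp

@[simp] theorem shiftₗ_coe : ⇑(shiftₗ K) = shift := rfl

theorem coeff_iterate_shift (A : K⟦X⟧) (i n : ℕ) : coeff n (shift^[i] A) = coeff (n + i) A := by
  induction i generalizing n with
  | zero => rfl
  | succ i ih =>
    rw [Function.iterate_succ_apply', coeff_shift, ih, Nat.add_right_comm, add_assoc]

variable (K) in
noncomputable def shuffleₗ : K⟦X⟧ →ₗ[K] K⟦X⟧ →ₗ[K] K⟦X⟧ :=
  LinearMap.mk₂ K shuffle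
    (fun A A' B => by
      ext n; simp only [coeff_shuffle, map_add, ← Finset.sum_add_distrib]; congr! 1; ring)
    (fun c A B => by
      ext n; simp only [coeff_shuffle, map_smul, smul_eq_mul, Finset.mul_sum]; congr! 1; ring)
    (fun A B B' => by
      ext n; simp only [coeff_shuffle, map_add, ← Finset.sum_add_distrib]; congr! 1; ring)
    (fun c A B => by
      ext n; simp only [coeff_shuffle, map_smul, smul_eq_mul, Finset.mul_sum]; congr! 1; ring)

theorem shift_shuffle (A B : K⟦X⟧) :
    shift (shuffle A B) = shuffle (shift A) B + shuffle A (shift B) := by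
  ext n
  have := Finset.sum_choose_succ_mul (fun i j => coeff i A * coeff j B) n
  simp only [coeff_shift, map_add, coeff_shuffle, ← mul_assoc] at this ⊢
  rw [this, add_comm]
  congr 1
  refine Finset.sum_congr rfl fun i hi => ?_
  rw [Nat.sub_add_comm (Finset.mem_range_succ_iff.1 hi)]

end Shuffle

section Rational

variable {K : Type*} [Field K]

abbrev shiftSpan (A : K⟦X⟧) : Submodule K K⟦X⟧ :=
  Submodule.span K (Set.range fun n => (shiftₗ K)^[n] A)

/-- The fractions `f / g` with `deg f < N`. -/
def seriesWithDenom (g : Polynomial K) (N : ℕ) : Submodule K K⟦X⟧ where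
  carrier := {P | ∀ n, N ≤ n → coeff n (P * (g : K⟦X⟧)) = 0}
  add_mem' ha hb n hn := by rw [add_mul, map_add, ha n hn, hb n hn, add_zero]
  zero_mem' n _ := by rw [zero_mul, map_zero]
  smul_mem' c P hP n hn := by rw [smul_mul_assoc, map_smul, hP n hn, smul_zero]

theorem seriesWithDenom_mem_invtSubmodule {g : Polynomial K} {N : ℕ} (hg : g.natDegree ≤ N) :
    seriesWithDenom g N ∈ (shiftₗ K).invtSubmodule := by
  rw [Module.End.mem_invtSubmodule_iff_forall_mem_of_mem]
  intro P hP n hn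
  have h := congrArg (fun Q => coeff (n + 1) (Q * (g : K⟦X⟧))) (X_mul_shift P)
  simp only [mul_assoc, coeff_succ_X_mul, sub_mul, map_sub, coeff_C_mul,
    Polynomial.coeff_coe] at h
  rw [shiftₗ_coe, h, hP (n + 1) (by omega),
    Polynomial.coeff_eq_zero_of_natDegree_lt (by omega), mul_zero, sub_zero]

theorem finiteDimensional_seriesWithDenom {g : Polynomial K} (hg : g ≠ 0) (N : ℕ) :
    FiniteDimensional K (seriesWithDenom g N) := by
  let L : seriesWithDenom g N →ₗ[K] Fin N → K := LinearMap.pi fun i =>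
    (coeff (i : ℕ)).comp ((LinearMap.mulRight K (g : K⟦X⟧)).comp (seriesWithDenom g N).subtype)
  refine FiniteDimensional.of_injective L ?_
  rw [← LinearMap.ker_eq_bot, LinearMap.ker_eq_bot']
  rintro ⟨P, hP⟩ hL
  have : P * g = 0 := by
    ext n
    rcases lt_or_ge n N with hn | hn
    · exact congrFun hL ⟨n, hn⟩
    · exact hP n hn
  simpa [Polynomial.coe_eq_zero_iff, hg] using this

theorem IsRationalPS.exists_mem_seriesWithDenom {A : K⟦X⟧} (hA : IsRationalPS A) :
    ∃ g : Polynomial K, ∃ N, g ≠ 0 ∧ g.natDegree ≤ N ∧ A ∈ seriesWithDenom g N := by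
  obtain ⟨f, g, hg0, hfg⟩ := hA
  refine ⟨g, max (f.natDegree + 1) g.natDegree, fun h => hg0 (by simp [h]), le_max_right _ _,
    fun n hn => ?_⟩
  rw [hfg, Polynomial.coeff_coe, Polynomial.coeff_eq_zero_of_natDegree_lt (by omega)]

theorem isRationalPS_of_mem_seriesWithDenom {g : Polynomial K} (hg : g.coeff 0 ≠ 0) {N : ℕ}
    {A : K⟦X⟧} (hA : A ∈ seriesWithDenom g N) : IsRationalPS A :=
  ⟨trunc N (A * (g : K⟦X⟧)), g, hg, (coe_trunc_eq_self hA).symm⟩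

theorem IsRationalPS.finiteDimensional_shiftSpan {A : K⟦X⟧} (hA : IsRationalPS A) :
    FiniteDimensional K (shiftSpan A) := by
  obtain ⟨g, N, hg, hgN, hAg⟩ := hA.exists_mem_seriesWithDenom
  have := finiteDimensional_seriesWithDenom hg N
  exact Submodule.finiteDimensional_of_le
    (Submodule.span_range_iterate_le (seriesWithDenom_mem_invtSubmodule hgN) hAg)

theorem exists_aeval_shiftₗ_eq_zero (A : K⟦X⟧) [FiniteDimensional K (shiftSpan A)] :
    ∃ p : Polynomial K, p ≠ 0 ∧ aeval (shiftₗ K) p A = 0 := by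
  let L : Polynomial K →ₗ[K] shiftSpan A :=
    LinearMap.codRestrict _ ((LinearMap.applyₗ A).comp (aeval (shiftₗ K)).toLinearMap)
      fun p => Submodule.aeval_apply_mem_span_range_iterate _ p A
  by_contra! h
  refine Polynomial.not_finite (R := K) (FiniteDimensional.of_injective L ?_)
  rw [← LinearMap.ker_eq_bot, LinearMap.ker_eq_bot']
  exact fun p hp => by_contra fun hp0 => h p hp0 (congrArg Subtype.val hp)

theorem isRationalPS_of_aeval_shiftₗ_eq_zero {p : Polynomial K} (hp : p ≠ 0) {A : K⟦X⟧}
    (hA : aeval (shiftₗ K) p A = 0) : IsRationalPS A := by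
  set m := p.natDegree
  let g : Polynomial K :=  -- the reversal `X ^ m * p (1 / X)`
    ∑ i ∈ Finset.range (m + 1), Polynomial.C (p.coeff i) * Polynomial.X ^ (m - i)
  have hg0 : g.coeff 0 = p.leadingCoeff := by
    simp only [g, Polynomial.finsetSum_coeff, Polynomial.coeff_C_mul_X_pow]
    rw [Finset.sum_eq_single_of_mem m (Finset.self_mem_range_succ m) fun i hi _ => if_neg (by
      simp only [Finset.mem_range] at hi; omega), if_pos (Nat.sub_self m).symm]
    rfl
  refine isRationalPS_of_mem_seriesWithDenom (g := g) (N := m)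
    (by rw [hg0]; exact Polynomial.leadingCoeff_ne_zero.2 hp) fun n hn => ?_
  have hrec := congrArg (coeff (n - m)) hA
  simp only [Polynomial.aeval_eq_sum_range, LinearMap.sum_apply, LinearMap.smul_apply,
    Module.End.pow_apply, map_sum, map_smul, smul_eq_mul, shiftₗ_coe, coeff_iterate_shift,
    map_zero] at hrec
  have hcoe : (g : K⟦X⟧) = ∑ i ∈ Finset.range (m + 1), C (p.coeff i) * X ^ (m - i) := by
    rw [← Polynomial.coeToPowerSeries.ringHom_apply, map_sum]
    simp [Polynomial.coeToPowerSeries.ringHom_apply]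
  rw [← hrec, hcoe, Finset.mul_sum, map_sum]
  refine Finset.sum_congr rfl fun i hi => ?_
  have him : i ≤ m := Finset.mem_range_succ_iff.1 hi
  rw [mul_left_comm, coeff_C_mul, coeff_mul_X_pow', if_pos (by omega),
    show n - (m - i) = n - m + i by omega]

theorem IsRationalPS.of_finiteDimensional_shiftSpan {A : K⟦X⟧}
    [FiniteDimensional K (shiftSpan A)] : IsRationalPS A :=
  let ⟨_, hp, hpA⟩ := exists_aeval_shiftₗ_eq_zero A
  isRationalPS_of_aeval_shiftₗ_eq_zero hp hpA

theorem shiftSpan_shuffle_le (A B : K⟦X⟧) :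
    shiftSpan (shuffle A B) ≤ Submodule.map₂ (shuffleₗ K) (shiftSpan A) (shiftSpan B) :=
  Submodule.span_range_iterate_le
    (Submodule.map₂_mem_invtSubmodule shift_shuffle
      (Submodule.span_range_iterate_mem_invtSubmodule _ _)
      (Submodule.span_range_iterate_mem_invtSubmodule _ _))
    (Submodule.apply_mem_map₂ _ (Submodule.subset_span ⟨0, rfl⟩)
      (Submodule.subset_span ⟨0, rfl⟩))

end Rational

/-- The shuffle product of two rational power series is rational, and
`‖A ⧢ B‖ ≤ ‖A‖·‖B‖`. -/
theorem shuffle_rational {K : Type*} [Field K] (A B : PowerSeries K)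
    (hA : IsRationalPS A) (hB : IsRationalPS B) :
    IsRationalPS (shuffle A B) ∧ psNorm (shuffle A B) ≤ psNorm A * psNorm B := by
  have := hA.finiteDimensional_shiftSpan
  have := hB.finiteDimensional_shiftSpan
  have := Submodule.finiteDimensional_map₂ (shuffleₗ K) (shiftSpan A) (shiftSpan B)
  have hle := shiftSpan_shuffle_le A B
  have := Submodule.finiteDimensional_of_le hle
  exact ⟨.of_finiteDimensional_shiftSpan,
    (Submodule.finrank_mono hle).trans (Submodule.finrank_map₂_le _ _ _)⟩
end
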